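/- Let n ≥ 1 be an integer and a > 0 a real number, and define Θ_a(ξ) = 2 e^{−2aξ} ξ^{1−n} ∫₀^ξ e^{2at} t^{n−1} dt for ξ > 0. Then the function ξ ↦ Θ_a(ξ) − 1/a is O(1/ξ) as ξ → +∞; that is, there exist constants C > 0 and R > 0 such that |Θ_a(ξ) − 1/a| ≤ C/ξ for all ξ ≥ R. -/

import Mathlib

open MeasureTheory intervalIntegral

/-- The profile function of Cao's steady gradient Kähler–Ricci soliton
on `ℂⁿ` in the Calabi ansatz. -/
noncomputable def caoProfile (n : ℕ) (a ξ : ℝ) : ℝ :=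
  2 * Real.exp (-(2 * a * ξ)) * ξ ^ ((1 : ℤ) - n) *
    ∫ t in (0 : ℝ)..ξ, Real.exp (2 * a * t) * t ^ (n - 1)

/-!
Integrating by parts, `c ∫₀^ξ e^{ct} t^(k+1) dt = e^{cξ} ξ^(k+1) - (k+1) ∫₀^ξ e^{ct} t^k dt`,
and the last integral is at most `e^{cξ} ξ^k / c`. Hence the normalized integral
`c e^{-cξ} ξ^{-k} ∫₀^ξ e^{ct} t^k dt` differs from `1` by at most `(k+1)/(cξ)`.
For `c = 2a` and `k = n - 1` it is `a Θ_a(ξ)`.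
-/

open Real

theorem mul_integral_exp_mul (c a b : ℝ) (hc : c ≠ 0) :
    c * ∫ t in a..b, exp (c * t) = exp (c * b) - exp (c * a) := by
  rw [integral_comp_mul_left (fun t => exp t) hc, integral_exp, smul_eq_mul,
    mul_inv_cancel_left₀ hc]

theorem mul_integral_exp_mul_mul_pow_succ (c a b : ℝ) (k : ℕ) :
    c * ∫ t in a..b, exp (c * t) * t ^ (k + 1) =
      exp (c * b) * b ^ (k + 1) - exp (c * a) * a ^ (k + 1) -
        (k + 1) * ∫ t in a..b, exp (c * t) * t ^ k := by
  have hderiv (t : ℝ) : HasDerivAt (fun s => exp (c * s) * s ^ (k + 1))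
      (c * (exp (c * t) * t ^ (k + 1)) + (k + 1) * (exp (c * t) * t ^ k)) t := by
    refine (((hasDerivAt_id' t).const_mul c).exp.mul (hasDerivAt_pow (k + 1) t)).congr_deriv ?_
    push_cast
    ring
  rw [← intervalIntegral.integral_const_mul, ← intervalIntegral.integral_const_mul,
    eq_sub_iff_add_eq, ← intervalIntegral.integral_add
      (Continuous.intervalIntegrable (by fun_prop) _ _)
      (Continuous.intervalIntegrable (by fun_prop) _ _)]
  exact integral_eq_sub_of_hasDerivAt (fun t _ => hderiv t)
    (Continuous.intervalIntegrable (by fun_prop) _ _)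

theorem mul_integral_exp_mul_mul_pow_le {c ξ : ℝ} (hc : 0 < c) (hξ : 0 ≤ ξ) (k : ℕ) :
    c * ∫ t in (0 : ℝ)..ξ, exp (c * t) * t ^ k ≤ exp (c * ξ) * ξ ^ k := by
  have hmono : ∫ t in (0 : ℝ)..ξ, exp (c * t) * t ^ k ≤ ∫ t in (0 : ℝ)..ξ, exp (c * t) * ξ ^ k :=
    integral_mono_on hξ (Continuous.intervalIntegrable (by fun_prop) _ _)
      (Continuous.intervalIntegrable (by fun_prop) _ _) fun t ht =>
        mul_le_mul_of_nonneg_left (pow_le_pow_left₀ ht.1 ht.2 k) (exp_pos _).le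
  calc c * ∫ t in (0 : ℝ)..ξ, exp (c * t) * t ^ k
      ≤ c * ∫ t in (0 : ℝ)..ξ, exp (c * t) * ξ ^ k := mul_le_mul_of_nonneg_left hmono hc.le
    _ = (c * ∫ t in (0 : ℝ)..ξ, exp (c * t)) * ξ ^ k := by
        rw [intervalIntegral.integral_mul_const, mul_assoc]
    _ = (exp (c * ξ) - 1) * ξ ^ k := by rw [mul_integral_exp_mul c 0 ξ hc.ne', mul_zero, exp_zero]
    _ ≤ exp (c * ξ) * ξ ^ k := by gcongr; linarith

theorem exp_neg_le_inv {x : ℝ} (hx : 0 < x) : exp (-x) ≤ x⁻¹ := by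
  rw [exp_neg]
  exact inv_anti₀ hx (by linarith [add_one_le_exp x])

theorem abs_mul_exp_neg_mul_pow_inv_integral_sub_one_le {c ξ : ℝ} (hc : 0 < c) (hξ : 0 < ξ)
    (k : ℕ) :
    |c * exp (-(c * ξ)) * (ξ ^ k)⁻¹ * (∫ t in (0 : ℝ)..ξ, exp (c * t) * t ^ k) - 1| ≤
      (k + 1) / (c * ξ) := by
  have hcξ : 0 < c * ξ := mul_pos hc hξ
  rcases k with _ | j
  · have hI := mul_integral_exp_mul c 0 ξ hc.ne'
    simp only [mul_zero, exp_zero] at hI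
    calc |c * exp (-(c * ξ)) * (ξ ^ 0)⁻¹ * (∫ t in (0 : ℝ)..ξ, exp (c * t) * t ^ 0) - 1|
        = exp (-(c * ξ)) := by
          simp only [pow_zero, inv_one, mul_one]
          rw [mul_comm c, mul_assoc, hI, exp_neg, mul_sub, inv_mul_cancel₀ (exp_pos _).ne',
            mul_one, sub_sub_cancel_left, abs_neg, abs_of_pos (inv_pos.2 (exp_pos _))]
      _ ≤ (c * ξ)⁻¹ := exp_neg_le_inv hcξ
      _ = ((0 : ℕ) + 1) / (c * ξ) := by simp
  · have hI := mul_integral_exp_mul_mul_pow_succ c 0 ξ j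
    have hIle := mul_integral_exp_mul_mul_pow_le hc hξ.le j
    set I := ∫ t in (0 : ℝ)..ξ, exp (c * t) * t ^ j
    have hI0 : 0 ≤ I := integral_nonneg hξ.le fun t ht =>
      mul_nonneg (exp_pos _).le (pow_nonneg ht.1 _)
    simp only [mul_zero, exp_zero, ne_eq, Nat.add_one_ne_zero, not_false_eq_true, zero_pow,
      sub_zero] at hI
    have hdiff : c * exp (-(c * ξ)) * (ξ ^ (j + 1))⁻¹ *
        (∫ t in (0 : ℝ)..ξ, exp (c * t) * t ^ (j + 1)) - 1 =
          -((j + 1) * (exp (c * ξ))⁻¹ * (ξ ^ (j + 1))⁻¹ * I) := by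
      rw [exp_neg]
      field_simp
      linear_combination hI
    calc _ = (j + 1) * (exp (c * ξ))⁻¹ * (ξ ^ (j + 1))⁻¹ * I := by
          rw [hdiff, abs_neg, abs_of_nonneg (by positivity)]
      _ ≤ (j + 1) * (exp (c * ξ))⁻¹ * (ξ ^ (j + 1))⁻¹ * (exp (c * ξ) * ξ ^ j / c) := by
          gcongr
          rw [le_div_iff₀ hc, mul_comm]
          exact hIle
      _ = (j + 1) / (c * ξ) := by
          field_simp
          ring
      _ ≤ ((j + 1 : ℕ) + 1) / (c * ξ) := by
          gcongr
          linarith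

theorem caoProfile_succ (m : ℕ) (a ξ : ℝ) :
    caoProfile (m + 1) a ξ =
      2 * exp (-(2 * a * ξ)) * (ξ ^ m)⁻¹ * ∫ t in (0 : ℝ)..ξ, exp (2 * a * t) * t ^ m := by
  rw [caoProfile, Nat.add_sub_cancel, Nat.cast_succ, sub_add_cancel_right, zpow_neg, zpow_natCast]

/-- The profile function of Cao's soliton satisfies
`Θ_a(ξ) = 1/a + O(ξ⁻¹)` as `ξ → ∞`. -/
theorem caoProfile_asymptotic (n : ℕ) (hn : 1 ≤ n) (a : ℝ) (ha : 0 < a) :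
    ∃ C > (0 : ℝ), ∃ R > (0 : ℝ), ∀ ξ ≥ R,
      |caoProfile n a ξ - 1 / a| ≤ C / ξ := by
  obtain ⟨m, rfl⟩ := Nat.exists_eq_add_of_le' hn
  refine ⟨(m + 1) / (2 * a ^ 2), by positivity, 1, one_pos, fun ξ hξ => ?_⟩
  have hξ0 : 0 < ξ := one_pos.trans_le hξ
  calc |caoProfile (m + 1) a ξ - 1 / a|
      = |2 * a * exp (-(2 * a * ξ)) * (ξ ^ m)⁻¹ *
          (∫ t in (0 : ℝ)..ξ, exp (2 * a * t) * t ^ m) - 1| / a := by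
        rw [caoProfile_succ, ← abs_of_pos ha, ← abs_div, abs_of_pos ha]
        congr 1
        field_simp
    _ ≤ (m + 1) / (2 * a * ξ) / a := by
        gcongr
        exact abs_mul_exp_neg_mul_pow_inv_integral_sub_one_le (by positivity) hξ0 m
    _ = (m + 1) / (2 * a ^ 2) / ξ := by
        field_simp
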